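/- There exists a complete system of mutually unbiased bases in ℂ^3: four orthonormal bases B_0, B_1, B_2, B_3 of EuclideanSpace ℂ (Fin 3) such that for any two distinct indices k ≠ l and any basis vectors e ∈ B_k, f ∈ B_l, one has |⟨e, f⟩| = 1/√3. -/

import Mathlib

/-!
For a finite field `F` of odd order `q` with a primitive additive character `ψ : F → ℂ`, the
standard basis of `ℂ^F` together with the `q` bases `{m ↦ ψ (a m² + j m) / √q}_j`, `a ∈ F`,
form `q + 1` mutually unbiased bases (Ivanović, Wootters–Fields). Orthonormality of each
quadratic basis and unbiasedness against the standard basis are immediate from character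
orthogonality; two quadratic bases with `a ≠ b` have inner products `(1/q) ∑ₘ ψ(c m² + d m)`
with `c ≠ 0`, a quadratic Gauss sum of absolute value `√q`. For `F = ZMod 3` this gives the
four bases of `ℂ^3`.
-/

open scoped InnerProductSpace ComplexConjugate
open Finset

section MutuallyUnbiasedBases

variable {F : Type*} [Field F] [Fintype F] {ψ : AddChar F ℂ}

theorem AddChar.norm_sum_apply_quadratic (hψ : ψ.IsPrimitive) (h2 : (2 : F) ≠ 0) {a : F}
    (ha : a ≠ 0) (b : F) :
    ‖∑ m, ψ (a * m ^ 2 + b * m)‖ = √(Fintype.card F) := by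
  classical
  set S := ∑ m, ψ (a * m ^ 2 + b * m)
  -- expand `‖S‖²` as a double sum and substitute `m = d + n`
  have hshift : ∀ d n : F, ψ (a * (d + n) ^ 2 + b * (d + n)) * conj (ψ (a * n ^ 2 + b * n)) =
      ψ (a * d ^ 2 + b * d) * ψ (n * (2 * a * d)) := by
    intro d n
    rw [← map_neg_eq_conj, ← map_add_eq_mul, ← map_add_eq_mul]
    ring_nf
  have hsq : ((‖S‖ ^ 2 : ℝ) : ℂ) = Fintype.card F :=
    calc ((‖S‖ ^ 2 : ℝ) : ℂ) = S * conj S := by simp [Complex.mul_conj']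
      _ = ∑ n, ∑ d, ψ (a * (d + n) ^ 2 + b * (d + n)) * conj (ψ (a * n ^ 2 + b * n)) := by
        rw [map_sum, sum_mul_sum, sum_comm]
        exact sum_congr rfl fun n _ => (Equiv.sum_comp (Equiv.addRight n)
          (fun m => ψ (a * m ^ 2 + b * m) * conj (ψ (a * n ^ 2 + b * n)))).symm
      _ = ∑ d, ψ (a * d ^ 2 + b * d) * ∑ n, ψ (n * (2 * a * d)) := by
        simp_rw [hshift, mul_sum]
        exact sum_comm
      _ = Fintype.card F := by
        simp_rw [AddChar.sum_mulShift _ hψ]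
        rw [sum_eq_single 0 (fun d _ hd => by simp [h2, ha, hd]) (by simp)]
        simp
  rw [← Real.sqrt_sq (norm_nonneg S)]
  congr 1
  exact_mod_cast hsq

variable (ψ) in
noncomputable def chirpVector (a j : F) : EuclideanSpace ℂ F :=
  WithLp.toLp 2 fun m => ((√(Fintype.card F) : ℝ) : ℂ)⁻¹ * ψ (a * m ^ 2 + j * m)

theorem inner_chirpVector (a j b k : F) :
    ⟪chirpVector ψ a j, chirpVector ψ b k⟫_ℂ =
      (Fintype.card F : ℂ)⁻¹ * ∑ m, ψ ((b - a) * m ^ 2 + (k - j) * m) := by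
  have hq : ((√(Fintype.card F) : ℝ) : ℂ) * (√(Fintype.card F) : ℝ) = Fintype.card F := by
    rw [← Complex.ofReal_mul, Real.mul_self_sqrt (Nat.cast_nonneg _), Complex.ofReal_natCast]
  simp only [chirpVector, PiLp.inner_apply, RCLike.inner_apply, mul_sum]
  refine sum_congr rfl fun m _ => ?_
  rw [map_mul, map_inv₀, Complex.conj_ofReal, ← AddChar.map_neg_eq_conj, ← hq, mul_inv,
    show (b - a) * m ^ 2 + (k - j) * m = -(a * m ^ 2 + j * m) + (b * m ^ 2 + k * m) by ring,
    AddChar.map_add_eq_mul ψ (-_)]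
  ring

theorem orthonormal_chirpVector (hψ : ψ.IsPrimitive) (a : F) :
    Orthonormal ℂ (chirpVector ψ a) := by
  classical
  rw [orthonormal_iff_ite]
  intro j k
  simp_rw [inner_chirpVector, sub_self, zero_mul, zero_add, mul_comm (k - j),
    AddChar.sum_mulShift _ hψ, sub_eq_zero, eq_comm (a := k)]
  split_ifs <;> simp

variable (ψ) in
noncomputable def chirpBasis (hψ : ψ.IsPrimitive) (a : F) :
    OrthonormalBasis F ℂ (EuclideanSpace ℂ F) :=
  .mk (orthonormal_chirpVector hψ a)
    ((orthonormal_chirpVector hψ a).linearIndependent.span_eq_top_of_card_eq_finrank'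
      (finrank_euclideanSpace ..).symm).ge

@[simp]
theorem chirpBasis_apply (hψ : ψ.IsPrimitive) (a j : F) :
    chirpBasis ψ hψ a j = chirpVector ψ a j := by
  simp [chirpBasis]

theorem norm_inner_basisFun_chirpVector (i a j : F) :
    ‖⟪EuclideanSpace.basisFun F ℂ i, chirpVector ψ a j⟫_ℂ‖ = 1 / √(Fintype.card F) := by
  simp [chirpVector]

theorem norm_inner_chirpVector_of_ne (hψ : ψ.IsPrimitive) (h2 : (2 : F) ≠ 0) {a b : F}
    (hab : a ≠ b) (j k : F) :
    ‖⟪chirpVector ψ a j, chirpVector ψ b k⟫_ℂ‖ = 1 / √(Fintype.card F) := by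
  rw [inner_chirpVector, norm_mul,
    AddChar.norm_sum_apply_quadratic hψ h2 (sub_ne_zero.2 hab.symm), norm_inv,
    Complex.norm_natCast, inv_mul_eq_div, Real.sqrt_div_self']

theorem exists_complete_system_of_MUBs_of_isPrimitive (hψ : ψ.IsPrimitive) (h2 : (2 : F) ≠ 0) :
    ∃ B : Option F → OrthonormalBasis F ℂ (EuclideanSpace ℂ F),
      ∀ k l, k ≠ l → ∀ i j, ‖⟪B k i, B l j⟫_ℂ‖ = 1 / √(Fintype.card F) := by
  refine ⟨fun k => k.elim (EuclideanSpace.basisFun F ℂ) (chirpBasis ψ hψ), ?_⟩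
  rintro (_ | a) (_ | b) hkl i j
  · exact absurd rfl hkl
  · simpa using norm_inner_basisFun_chirpVector i b j
  · rw [norm_inner_symm]
    simpa using norm_inner_basisFun_chirpVector j a i
  · simpa using norm_inner_chirpVector_of_ne hψ h2 (by simpa using hkl) i j

end MutuallyUnbiasedBases

/-- There exists a complete system of mutually unbiased bases in `ℂ^3`: four
orthonormal bases such that any two vectors from distinct bases have Hermitian
inner product of absolute value `1/√3`. -/
theorem exists_complete_system_of_MUBs_C3 :
    ∃ B : Fin 4 → OrthonormalBasis (Fin 3) ℂ (EuclideanSpace ℂ (Fin 3)),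
      ∀ k l : Fin 4, k ≠ l → ∀ i j : Fin 3,
        ‖⟪B k i, B l j⟫_ℂ‖ = 1 / Real.sqrt 3 := by
  obtain ⟨B, hB⟩ := exists_complete_system_of_MUBs_of_isPrimitive
    (ZMod.isPrimitive_stdAddChar 3) (by decide : (2 : ZMod 3) ≠ 0)
  refine ⟨fun k => B (finSuccEquiv 3 k), fun k l hkl i j => ?_⟩
  have := hB _ _ ((finSuccEquiv 3).injective.ne hkl) i j
  rw [ZMod.card] at this
  -- `ZMod 3` is by definition `Fin 3`
  exact this
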